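/- Let G be a finite simple graph with no isolated vertices that is (H1, H2, C6)-free, and let S be an S(G)-set. Then γt(G) = 2γ(G) if and only if S is both a packing and a dominating set of G. -/

import Mathlib

open SimpleGraph

namespace TotalDom

variable {V : Type*}

/-- The closed neighborhood `N[v]` of a vertex. -/
def cnbr (G : SimpleGraph V) (v : V) : Set V := insert v (G.neighborSet v)

/-- `S` is a dominating set: every vertex outside `S` has a neighbor in `S`. -/
def IsDomSet (G : SimpleGraph V) (S : Set V) : Prop := ∀ v ∉ S, ∃ u ∈ S, G.Adj u v

/-- `S` is a total dominating set: every vertex has a neighbor in `S`. -/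
def IsTotalDomSet (G : SimpleGraph V) (S : Set V) : Prop := ∀ v : V, ∃ u ∈ S, G.Adj u v

/-- The domination number `γ(G)`. -/
noncomputable def domNum (G : SimpleGraph V) : ℕ :=
  sInf {n | ∃ S : Set V, IsDomSet G S ∧ S.ncard = n}

/-- The total domination number `γₜ(G)`. -/
noncomputable def totalDomNum (G : SimpleGraph V) : ℕ :=
  sInf {n | ∃ S : Set V, IsTotalDomSet G S ∧ S.ncard = n}

/-- A minimum dominating set (γ-set). -/
def IsMinDomSet (G : SimpleGraph V) (S : Set V) : Prop := IsDomSet G S ∧ S.ncard = domNum G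

/-- `S` is a packing: closed neighborhoods of distinct members are disjoint. -/
def IsPacking (G : SimpleGraph V) (S : Set V) : Prop :=
  S.Pairwise fun u v => Disjoint (cnbr G u) (cnbr G v)

/-- `M(v)`: neighbors of `v` having a neighbor outside `N[v]`. -/
def Mset (G : SimpleGraph V) (v : V) : Set V :=
  {u | G.Adj v u ∧ ∃ w, G.Adj u w ∧ w ∉ cnbr G v}

/-- `D(v)`: neighbors `u` of `v` that are not true twins of `v` with `N[u] ⊆ N[v]`. -/
def Dset (G : SimpleGraph V) (v : V) : Set V :=
  {u | G.Adj v u ∧ cnbr G u ≠ cnbr G v ∧ cnbr G u ⊆ cnbr G v}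

/-- `T(v)`: `v` together with its true twins. -/
def Tset (G : SimpleGraph V) (v : V) : Set V := {u | cnbr G u = cnbr G v}

/-- A non-isolated vertex `v` is special if no `u ∈ M(v)` satisfies `D(v) ⊆ N(u)`. -/
def Special (G : SimpleGraph V) (v : V) : Prop :=
  (G.neighborSet v).Nonempty ∧ ¬ ∃ u ∈ Mset G v, Dset G v ⊆ G.neighborSet u

/-- An `S(G)`-set: a set of special vertices containing exactly one vertex from each
true-twin equivalence class of special vertices. -/
def IsSGSet (G : SimpleGraph V) (S : Set V) : Prop :=
  (∀ u ∈ S, Special G u) ∧ ∀ v, Special G v → ∃! u, u ∈ S ∧ u ∈ Tset G v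

/-- `G` has no isolated vertices. -/
def NoIsolated (G : SimpleGraph V) : Prop := ∀ v : V, ∃ u, G.Adj v u

/-- `G` contains no induced copy of `H`. -/
def Free {α : Type*} (H : SimpleGraph α) (G : SimpleGraph V) : Prop := IsEmpty (H ↪g G)

/-- `H₁`: a 6-cycle plus one chord between vertices at distance two along the cycle. -/
def H1 : SimpleGraph (Fin 6) := cycleGraph 6 ⊔ fromEdgeSet {s(0, 2)}

/-- `H₂`: a 6-cycle `x₁x₂x₃x₄x₅x₆` plus the chords `x₂x₆` and `x₃x₅`. -/
def H2 : SimpleGraph (Fin 6) := cycleGraph 6 ⊔ fromEdgeSet {s(1, 5), s(2, 4)}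

/-- A leaf: a vertex of degree one. -/
def IsLeaf (G : SimpleGraph V) (v : V) : Prop := ∃! u, G.Adj v u

/-- A support vertex: a vertex adjacent to a leaf. -/
def IsSupport (G : SimpleGraph V) (v : V) : Prop := ∃ u, G.Adj v u ∧ IsLeaf G u

/-- `sup(G)`: the set of support vertices. -/
def supSet (G : SimpleGraph V) : Set V := {v | IsSupport G v}

/-!
If `γₜ(G) = 2γ(G)` and `D` is a minimum dominating set, no total dominating set of the form
`B ∪ f(B) ∪ E`, with `B ⊆ D` and `f` choosing a neighbor of each vertex, has fewer than `2|D|`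
vertices. Small choices of `B` and `E` show that `D` is a packing and that every special neighbor
of a vertex `v ∈ D` is a true twin of `v`. They also show that every `v ∈ D` is special: otherwise
take `B = D \ {v}`, `E = {u}` for a witness `u ∈ M(v)`, and let `f(d)` be a neighbor of `d`
adjacent to every vertex of `N(v)` that has a neighbor in `N(d)`; such a common neighbor exists
because `G` is `(H₁, H₂, C₆)`-free. Hence an `S(G)`-set is `D` up to true twins. Conversely, any
total dominating set meets the closed neighborhood of a special vertex at least twice, so a
dominating packing `S` of special vertices gives `γₜ ≥ 2|S| ≥ 2γ ≥ γₜ`.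
-/

instance : DecidableRel H1.Adj := by unfold H1; infer_instance

instance : DecidableRel H2.Adj := by unfold H2; infer_instance

section Induced

variable {W : Type*} {G : SimpleGraph V}

lemma Free.false_of_adj_iff {H : SimpleGraph W} (hG : Free H G)
    (hH : ∀ i j, (∀ k, H.Adj i k ↔ H.Adj j k) → i = j) (f : W → V)
    (hf : ∀ i j, G.Adj (f i) (f j) ↔ H.Adj i j) : False :=
  hG.false ⟨⟨f, fun i j hij => hH i j fun k => by rw [← hf, ← hf, hij]⟩, hf _ _⟩

lemma adj_iff_of_forall_lt [LinearOrder W] {H : SimpleGraph W} {f : W → V}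
    (hf : ∀ i j, i < j → (G.Adj (f i) (f j) ↔ H.Adj i j)) (i j : W) :
    G.Adj (f i) (f j) ↔ H.Adj i j := by
  rcases lt_trichotomy i j with h | rfl | h
  · exact hf i j h
  · simp
  · rw [G.adj_comm, H.adj_comm]
    exact hf j i h

/-- The only possible extra edges of the six-cycle `a x₁ y₁ d y₂ x₂` are the chords `x₁x₂` and
`y₁y₂`; with both it is `H₂`, with one of them `H₁`, with none `C₆`. -/
lemma false_of_sixCycle (hH1 : Free H1 G) (hH2 : Free H2 G) (hC6 : Free (cycleGraph 6) G)
    {a x₁ y₁ d y₂ x₂ : V} (e₁ : G.Adj a x₁) (e₂ : G.Adj x₁ y₁) (e₃ : G.Adj y₁ d)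
    (e₄ : G.Adj d y₂) (e₅ : G.Adj y₂ x₂) (e₆ : G.Adj x₂ a)
    (n₁ : ¬ G.Adj a y₁) (n₂ : ¬ G.Adj a y₂) (n₃ : ¬ G.Adj a d) (n₄ : ¬ G.Adj x₁ d)
    (n₅ : ¬ G.Adj x₂ d) (n₆ : ¬ G.Adj x₁ y₂) (n₇ : ¬ G.Adj x₂ y₁) : False := by
  by_cases c₁ : G.Adj x₁ x₂ <;> by_cases c₂ : G.Adj y₁ y₂
  on_goal 1 => refine hH2.false_of_adj_iff (by decide) ![a, x₁, y₁, d, y₂, x₂] ?_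
  on_goal 2 => refine hH1.false_of_adj_iff (by decide) ![x₂, a, x₁, y₁, d, y₂] ?_
  on_goal 3 => refine hH1.false_of_adj_iff (by decide) ![y₂, d, y₁, x₁, a, x₂] ?_
  on_goal 4 => refine hC6.false_of_adj_iff (by decide) ![a, x₁, y₁, d, y₂, x₂] ?_
  all_goals
    refine adj_iff_of_forall_lt fun i j hij => ?_
    fin_cases i <;> fin_cases j <;>
      simp only [Fin.zero_eta, Fin.mk_one, Fin.reduceFinMk, Matrix.cons_val] at hij ⊢ <;>
      first
        | exact absurd hij (by decide)
        | exact iff_of_true ‹_› (by decide)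
        | exact iff_of_true (‹_› : G.Adj _ _).symm (by decide)
        | exact iff_of_false ‹_› (by decide)
        | exact iff_of_false (fun h => absurd h.symm ‹_›) (by decide)

end Induced

section Neighborhoods

variable {G : SimpleGraph V} {u v w x : V}

lemma mem_cnbr_self : v ∈ cnbr G v := Set.mem_insert v _

lemma mem_cnbr_of_adj (h : G.Adj v u) : u ∈ cnbr G v := Or.inr h

lemma adj_of_mem_cnbr (h : u ∈ cnbr G v) (hne : u ≠ v) : G.Adj v u := h.resolve_left hne

lemma mem_cnbr_comm : u ∈ cnbr G v ↔ v ∈ cnbr G u := by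
  simp only [cnbr, Set.mem_insert_iff, mem_neighborSet, eq_comm, G.adj_comm]

lemma exists_adj_of_mem_cnbr (h : G.Adj u w) (hx : x ∈ cnbr G u) :
    ∃ e ∈ ({u, w} : Set V), G.Adj e x := by
  rcases hx with rfl | hux
  · exact ⟨w, by simp, h.symm⟩
  · exact ⟨u, by simp, hux⟩

lemma exists_adj_of_mem_cnbr_inter (huv : u ≠ v) (hwu : w ∈ cnbr G u) (hwv : w ∈ cnbr G v)
    (hx : x ∈ cnbr G u) : ∃ e ∈ ({u, v, w} : Set V), G.Adj e x := by
  rcases hx with rfl | hux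
  · rcases hwu with rfl | hxw
    · exact ⟨v, by simp, adj_of_mem_cnbr hwv huv⟩
    · exact ⟨w, by simp, hxw.symm⟩
  · exact ⟨u, by simp, hux⟩

end Neighborhoods

section Special

variable {G : SimpleGraph V} {u v s x : V}

lemma not_special_of_cnbr_ssubset (hadj : G.Adj v s) (h : cnbr G s ⊂ cnbr G v) :
    ¬ Special G s := by
  obtain ⟨w, hwv, hws⟩ := Set.exists_of_ssubset h
  have hwv' : w ≠ v := fun hw => hws (hw ▸ mem_cnbr_of_adj hadj.symm)
  refine fun hs => hs.2 ⟨v, ⟨hadj.symm, w, adj_of_mem_cnbr hwv hwv', hws⟩, ?_⟩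
  rintro t ⟨-, -, hts⟩
  have htv : t ≠ v := by
    rintro rfl
    exact h.not_subset hts
  exact adj_of_mem_cnbr (h.subset (hts mem_cnbr_self)) htv

/-- Such an `x` is either a true twin of `v` or lies in `D(v)`. -/
lemma adj_of_cnbr_subset (hu : u ∈ Mset G v) (hDu : Dset G v ⊆ G.neighborSet u)
    (hvx : G.Adj v x) (hx : cnbr G x ⊆ cnbr G v) : G.Adj u x := by
  obtain ⟨hvu, w, huw, hwv⟩ := hu
  by_cases htwin : cnbr G x = cnbr G v
  · have hux : u ≠ x := by
      rintro rfl
      exact hwv (hx (mem_cnbr_of_adj huw))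
    exact (adj_of_mem_cnbr (htwin ▸ mem_cnbr_of_adj hvu : u ∈ cnbr G x) hux).symm
  · exact hDu ⟨hvx, htwin, hx⟩

/-- If `u` were the only member of `T` in `N[x]`, it would witness that `x` is not special. -/
lemma two_le_ncard_inter_cnbr [Finite V] {T : Set V} (hT : IsTotalDomSet G T)
    (hx : Special G x) : 2 ≤ (T ∩ cnbr G x).ncard := by
  obtain ⟨u, huT, hux⟩ := hT x
  by_contra! hlt
  have hone : ∀ t ∈ T, t ∈ cnbr G x → t = u := fun t ht htx =>
    (Set.ncard_le_one_iff (s := T ∩ cnbr G x)).1 (by omega) ⟨ht, htx⟩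
      ⟨huT, mem_cnbr_of_adj hux.symm⟩
  obtain ⟨z, hzT, hzu⟩ := hT u
  have hzx : z ∉ cnbr G x := fun hz => G.loopless.irrefl u (hone z hzT hz ▸ hzu)
  refine hx.2 ⟨u, ⟨hux.symm, z, hzu.symm, hzx⟩, ?_⟩
  rintro t ⟨-, -, htx⟩
  obtain ⟨z', hz'T, hz't⟩ := hT t
  exact hone z' hz'T (htx (mem_cnbr_of_adj hz't.symm)) ▸ hz't

end Special

section Domination

variable {G : SimpleGraph V}

lemma exists_isMinDomSet (G : SimpleGraph V) : ∃ D, IsMinDomSet G D :=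
  Nat.sInf_mem (s := {n | ∃ S : Set V, IsDomSet G S ∧ S.ncard = n})
    ⟨_, Set.univ, fun v hv => absurd (Set.mem_univ v) hv, rfl⟩

lemma domNum_le_ncard {D : Set V} (hD : IsDomSet G D) : domNum G ≤ D.ncard :=
  Nat.sInf_le ⟨D, hD, rfl⟩

lemma totalDomNum_le_ncard {T : Set V} (hT : IsTotalDomSet G T) : totalDomNum G ≤ T.ncard :=
  Nat.sInf_le ⟨T, hT, rfl⟩

lemma le_domNum {n : ℕ} (h : ∀ D, IsDomSet G D → n ≤ D.ncard) : n ≤ domNum G :=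
  le_csInf ⟨_, Set.univ, fun v hv => absurd (Set.mem_univ v) hv, rfl⟩
    (by rintro _ ⟨D, hD, rfl⟩; exact h D hD)

lemma le_totalDomNum (hiso : NoIsolated G) {n : ℕ} (h : ∀ T, IsTotalDomSet G T → n ≤ T.ncard) :
    n ≤ totalDomNum G :=
  le_csInf ⟨_, Set.univ, fun v => (hiso v).imp fun u hu => ⟨Set.mem_univ u, hu.symm⟩, rfl⟩
    (by rintro _ ⟨T, hT, rfl⟩; exact h T hT)

lemma IsDomSet.exists_mem_cnbr {D : Set V} (hD : IsDomSet G D) (x : V) :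
    ∃ d ∈ D, x ∈ cnbr G d := by
  by_cases hx : x ∈ D
  · exact ⟨x, hx, mem_cnbr_self⟩
  · obtain ⟨d, hd, hdx⟩ := hD x hx
    exact ⟨d, hd, mem_cnbr_of_adj hdx⟩

lemma IsPacking.mul_ncard_le [Finite V] {P T : Set V} (hP : IsPacking G P) {k : ℕ}
    (h : ∀ x ∈ P, k ≤ (T ∩ cnbr G x).ncard) : k * P.ncard ≤ T.ncard := by
  have hdisj : P.PairwiseDisjoint fun x => T ∩ cnbr G x := fun x hx y hy hxy =>
    (hP hx hy hxy).mono Set.inter_subset_right Set.inter_subset_right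
  calc k * P.ncard = ∑ _x ∈ P.toFinite.toFinset, k := by
        rw [Finset.sum_const, smul_eq_mul, mul_comm, Set.ncard_eq_toFinset_card _ P.toFinite]
    _ ≤ ∑ x ∈ P.toFinite.toFinset, (T ∩ cnbr G x).ncard :=
        Finset.sum_le_sum fun x hx => h x (P.toFinite.mem_toFinset.1 hx)
    _ = (⋃ x ∈ P, T ∩ cnbr G x).ncard := by
        rw [P.toFinite.ncard_biUnion (fun _ _ => Set.toFinite _) hdisj,
          finsum_mem_eq_finite_toFinset_sum]
    _ ≤ T.ncard := Set.ncard_le_ncard (Set.iUnion₂_subset fun _ _ => Set.inter_subset_left)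

/-- The total dominating set is `B ∪ f '' B ∪ E`. -/
lemma totalDomNum_le_of_forall [Finite V] {B E : Set V} (f : V → V)
    (hf : ∀ b ∈ B, G.Adj b (f b))
    (hE : ∀ x, (∀ b ∈ B, x ∉ cnbr G b) → ∃ e ∈ f '' B ∪ E, G.Adj e x) :
    totalDomNum G ≤ 2 * B.ncard + E.ncard := by
  have hT : IsTotalDomSet G (B ∪ (f '' B ∪ E)) := by
    intro x
    by_cases hx : ∃ b ∈ B, x ∈ cnbr G b
    · obtain ⟨b, hb, rfl | hbx⟩ := hx
      · exact ⟨f x, Or.inr (Or.inl ⟨x, hb, rfl⟩), (hf x hb).symm⟩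
      · exact ⟨b, Or.inl hb, hbx⟩
    · push Not at hx
      obtain ⟨e, he, hex⟩ := hE x hx
      exact ⟨e, Or.inr he, hex⟩
  have h₁ := Set.ncard_union_le B (f '' B ∪ E)
  have h₂ := Set.ncard_union_le (f '' B) E
  have h₃ := Set.ncard_image_le (f := f) B.toFinite
  have h₄ := totalDomNum_le_ncard hT
  omega

lemma IsDomSet.totalDomNum_add_le [Finite V] (hiso : NoIsolated G) {D A E : Set V}
    (hD : IsDomSet G D) (hAD : A ⊆ D) (hE : ∀ a ∈ A, ∀ x ∈ cnbr G a, ∃ e ∈ E, G.Adj e x) :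
    totalDomNum G + 2 * A.ncard ≤ 2 * D.ncard + E.ncard := by
  choose nb hnb using hiso
  have hB := totalDomNum_le_of_forall (B := D \ A) (E := E) nb (fun b _ => hnb b) fun x hx => by
    obtain ⟨d, hd, hxd⟩ := hD.exists_mem_cnbr x
    have hdA : d ∈ A := by_contra fun hdA => hx d ⟨hd, hdA⟩ hxd
    obtain ⟨e, he, hex⟩ := hE d hdA x hxd
    exact ⟨e, Or.inr he, hex⟩
  have := Set.ncard_sdiff_add_ncard_of_subset hAD
  omega

lemma totalDomNum_le_two_mul_domNum [Finite V] (hiso : NoIsolated G) :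
    totalDomNum G ≤ 2 * domNum G := by
  obtain ⟨D, hD, hDn⟩ := exists_isMinDomSet G
  simpa [hDn] using hD.totalDomNum_add_le hiso (Set.empty_subset D) (E := ∅) (by simp)

lemma IsMinDomSet.two_mul_ncard_le [Finite V] (hiso : NoIsolated G)
    (heq : totalDomNum G = 2 * domNum G) {D A E : Set V} (hD : IsMinDomSet G D)
    (hAD : A ⊆ D) (hE : ∀ a ∈ A, ∀ x ∈ cnbr G a, ∃ e ∈ E, G.Adj e x) :
    2 * A.ncard ≤ E.ncard := by
  have := hD.1.totalDomNum_add_le hiso hAD hE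
  rw [heq, hD.2] at this
  omega

lemma IsMinDomSet.isPacking [Finite V] (hiso : NoIsolated G)
    (heq : totalDomNum G = 2 * domNum G) {D : Set V} (hD : IsMinDomSet G D) :
    IsPacking G D := by
  intro u hu v hv huv
  by_contra hnd
  obtain ⟨w, hwu, hwv⟩ := Set.not_disjoint_iff.1 hnd
  have hE : ∀ a ∈ ({u, v} : Set V), ∀ x ∈ cnbr G a, ∃ e ∈ ({u, v, w} : Set V), G.Adj e x := by
    rintro a (rfl | rfl) x hx
    · exact exists_adj_of_mem_cnbr_inter huv hwu hwv hx
    · obtain ⟨e, he, hex⟩ := exists_adj_of_mem_cnbr_inter huv.symm hwv hwu hx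
      exact ⟨e, Set.insert_comm a u {w} ▸ he, hex⟩
  have h₁ := hD.two_mul_ncard_le hiso heq (Set.pair_subset hu hv) hE
  have h₂ : ({u, v, w} : Set V).ncard ≤ 3 :=
    (Set.ncard_insert_le _ _).trans (by grw [Set.ncard_insert_le, Set.ncard_singleton])
  rw [Set.ncard_pair huv] at h₁
  omega

/-- Take a neighbor `z` of `d` with `|N(v) ∩ N(z)|` maximal: a vertex `x ∈ N(v)` with a neighbor
`y ∈ N(d)` but not adjacent to `z` would give `N(v) ∩ N(z) ⊂ N(v) ∩ N(y)`, since for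
`x' ∈ N(v) ∩ N(z)` the six-cycle `v x' z d y x` forces the chord `x'y`. -/
lemma exists_adj_forall_adj_of_disjoint [Finite V] (hH1 : Free H1 G) (hH2 : Free H2 G)
    (hC6 : Free (cycleGraph 6) G) {v d : V} (hd : ∃ z, G.Adj d z)
    (hvd : Disjoint (cnbr G v) (cnbr G d)) :
    ∃ z, G.Adj d z ∧ ∀ x y, G.Adj v x → G.Adj x y → G.Adj d y → G.Adj z x := by
  have hv : ∀ {q}, q ∈ cnbr G d → ¬ G.Adj v q := fun hq h =>
    Set.disjoint_left.1 hvd (mem_cnbr_of_adj h) hq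
  have hd' : ∀ {p}, G.Adj v p → ¬ G.Adj p d := fun hp h =>
    Set.disjoint_left.1 hvd (mem_cnbr_of_adj hp) (mem_cnbr_of_adj h.symm)
  obtain ⟨z, hz, hmax⟩ := Set.exists_max_image (G.neighborSet d)
    (fun y => (G.neighborSet v ∩ G.neighborSet y).ncard) (Set.toFinite _) hd
  refine ⟨z, hz, fun x y hvx hxy hdy => ?_⟩
  by_contra hzx
  have hsub : G.neighborSet v ∩ G.neighborSet z ⊂ G.neighborSet v ∩ G.neighborSet y := by
    refine (Set.ssubset_iff_of_subset ?_).2 ⟨x, ⟨hvx, hxy.symm⟩, fun h => hzx h.2⟩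
    rintro x' ⟨hvx', hzx'⟩
    refine ⟨hvx', by_contra fun hx'y => ?_⟩
    exact false_of_sixCycle hH1 hH2 hC6 hvx' hzx'.symm hz.symm hdy hxy.symm hvx.symm
      (hv (mem_cnbr_of_adj hz)) (hv (mem_cnbr_of_adj hdy)) (hv mem_cnbr_self) (hd' hvx')
      (hd' hvx) (fun h => hx'y h.symm) (fun h => hzx h.symm)
  exact (Set.ncard_lt_ncard hsub).not_ge (hmax y hdy)

lemma IsMinDomSet.special [Finite V] (hiso : NoIsolated G) (hH1 : Free H1 G) (hH2 : Free H2 G)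
    (hC6 : Free (cycleGraph 6) G) (heq : totalDomNum G = 2 * domNum G) {D : Set V}
    (hD : IsMinDomSet G D) {v : V} (hv : v ∈ D) : Special G v := by
  refine ⟨hiso v, fun ⟨u, hu, hDu⟩ => ?_⟩
  have hpack := hD.isPacking hiso heq
  have hvu : G.Adj v u := hu.1
  have hfar : ∀ y, y ∉ cnbr G v → ∃ d ∈ D \ {v}, y ∈ cnbr G d := fun y hy => by
    obtain ⟨d, hd, hyd⟩ := hD.1.exists_mem_cnbr y
    exact ⟨d, ⟨hd, by rintro rfl; exact hy hyd⟩, hyd⟩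
  choose! z hzd hz using fun d (hd : d ∈ D \ {v}) =>
    exists_adj_forall_adj_of_disjoint hH1 hH2 hC6 (hiso d) (hpack hv hd.1 (Ne.symm hd.2))
  have hT := totalDomNum_le_of_forall (B := D \ {v}) (E := {u}) z hzd fun x hx => by
    have hxv : x ∈ cnbr G v := by
      obtain ⟨d, hd, hxd⟩ := hD.1.exists_mem_cnbr x
      by_contra hdv
      exact hx d ⟨hd, fun h => hdv (h ▸ hxd)⟩ hxd
    rcases hxv with rfl | hvx
    · exact ⟨u, Or.inr rfl, hvu.symm⟩
    by_cases hy : ∃ y, G.Adj x y ∧ y ∉ cnbr G v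
    · obtain ⟨y, hxy, hyv⟩ := hy
      obtain ⟨d, hd, rfl | hdy⟩ := hfar y hyv
      · exact absurd (mem_cnbr_of_adj hxy.symm) (hx y hd)
      · exact ⟨z d, Or.inl ⟨d, hd, rfl⟩, hz d hd x y hvx hxy hdy⟩
    · push Not at hy
      refine ⟨u, Or.inr rfl, adj_of_cnbr_subset hu hDu hvx ?_⟩
      rintro y (rfl | hxy)
      exacts [mem_cnbr_of_adj hvx, hy y hxy]
  have := Set.ncard_sdiff_singleton_add_one hv
  rw [Set.ncard_singleton, heq, ← hD.2] at hT
  omega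

lemma IsMinDomSet.cnbr_eq_of_special [Finite V] (hiso : NoIsolated G)
    (heq : totalDomNum G = 2 * domNum G) {D : Set V} (hD : IsMinDomSet G D)
    (hsp : ∀ d ∈ D, Special G d) {v s : V} (hv : v ∈ D) (hadj : G.Adj v s)
    (hs : Special G s) : cnbr G s = cnbr G v := by
  by_contra hne
  have hsv : ¬ cnbr G s ⊆ cnbr G v := fun h =>
    not_special_of_cnbr_ssubset hadj (h.ssubset_of_ne hne) hs
  have hvs : ¬ cnbr G v ⊆ cnbr G s := fun h =>
    not_special_of_cnbr_ssubset hadj.symm (h.ssubset_of_ne (Ne.symm hne)) (hsp v hv)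
  obtain ⟨w, hwv, hws⟩ := Set.not_subset.1 hvs
  have hwv' : w ≠ v := fun h => hws (h ▸ mem_cnbr_of_adj hadj.symm)
  obtain ⟨t, ⟨-, -, hts⟩, hvt⟩ := Set.not_subset.1 fun hDv =>
    hs.2 ⟨v, ⟨hadj.symm, w, adj_of_mem_cnbr hwv hwv', hws⟩, hDv⟩
  have htv : t ∉ cnbr G v := by
    rintro (rfl | h)
    exacts [hvs hts, hvt h]
  -- `t ∈ D`: a dominator `d ≠ t` of `t` lies in `N[t] ⊆ N[s]`, putting `s` in `N[v] ∩ N[d]`.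
  obtain ⟨d, hd, rfl | hdt⟩ := hD.1.exists_mem_cnbr t
  · have hE : ∀ a ∈ ({v, t} : Set V), ∀ x ∈ cnbr G a, ∃ e ∈ ({v, s} : Set V), G.Adj e x := by
      rintro a (rfl | rfl) x hx
      · exact exists_adj_of_mem_cnbr hadj hx
      · obtain ⟨e, he, hex⟩ := exists_adj_of_mem_cnbr hadj.symm (hts hx)
        exact ⟨e, Set.pair_comm v s ▸ he, hex⟩
    have h₁ := hD.two_mul_ncard_le hiso heq (Set.pair_subset hv hd) hE
    rw [Set.ncard_pair (by rintro rfl; exact htv mem_cnbr_self)] at h₁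
    have h₂ := Set.ncard_insert_le v {s}
    rw [Set.ncard_singleton] at h₂
    omega
  · have hdv : d ≠ v := fun h => htv (h ▸ mem_cnbr_of_adj hdt)
    have hsd : s ∈ cnbr G d := mem_cnbr_comm.1 (hts (mem_cnbr_of_adj hdt.symm))
    exact Set.disjoint_left.1 (hD.isPacking hiso heq hv hd (Ne.symm hdv))
      (mem_cnbr_of_adj hadj) hsd

lemma IsPacking.totalDomNum_eq [Finite V] (hiso : NoIsolated G) {P : Set V}
    (hP : IsPacking G P) (hsp : ∀ x ∈ P, Special G x) (hPD : IsDomSet G P) :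
    totalDomNum G = 2 * domNum G := by
  have h₁ : P.ncard ≤ domNum G := le_domNum fun D hD => by
    simpa using hP.mul_ncard_le (k := 1) fun x _ => by
      obtain ⟨d, hd, hxd⟩ := hD.exists_mem_cnbr x
      exact (Set.ncard_pos).2 ⟨d, hd, mem_cnbr_comm.1 hxd⟩
  have h₂ : 2 * P.ncard ≤ totalDomNum G := le_totalDomNum hiso fun T hT =>
    hP.mul_ncard_le fun x hx => two_le_ncard_inter_cnbr hT (hsp x hx)
  have h₃ := domNum_le_ncard hPD
  have h₄ := totalDomNum_le_two_mul_domNum hiso (G := G)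
  omega

end Domination

section SGSet

variable {G : SimpleGraph V} {S : Set V}

lemma IsSGSet.eq_of_cnbr_eq (hS : IsSGSet G S) {x y : V} (hx : x ∈ S) (hy : y ∈ S)
    (h : cnbr G x = cnbr G y) : x = y := by
  obtain ⟨u, -, hu⟩ := hS.2 x (hS.1 x hx)
  exact (hu x ⟨hx, rfl⟩).trans (hu y ⟨hy, h.symm⟩).symm

lemma IsSGSet.isPacking (hS : IsSGSet G S) {D : Set V} (hD : IsPacking G D)
    (htwin : ∀ x, Special G x → ∃ d ∈ D, cnbr G x = cnbr G d) : IsPacking G S := by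
  intro x hx y hy hxy
  obtain ⟨d, hd, hxd⟩ := htwin x (hS.1 x hx)
  obtain ⟨d', hd', hyd'⟩ := htwin y (hS.1 y hy)
  rw [hxd, hyd']
  exact hD hd hd' fun h => hxy (hS.eq_of_cnbr_eq hx hy (by rw [hxd, hyd', h]))

lemma IsSGSet.isDomSet (hS : IsSGSet G S) {D : Set V} (hD : IsDomSet G D)
    (hsp : ∀ d ∈ D, Special G d) : IsDomSet G S := by
  intro x hx
  obtain ⟨d, hd, hxd⟩ := hD.exists_mem_cnbr x
  obtain ⟨s, ⟨hs, hsd⟩, -⟩ := hS.2 d (hsp d hd)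
  exact ⟨s, hs, adj_of_mem_cnbr ((hsd : cnbr G s = cnbr G d) ▸ hxd) fun h => hx (h ▸ hs)⟩

end SGSet

/-- **Main Theorem.** For an `(H₁,H₂,C₆)`-free graph `G` with no isolated vertices and an
`S(G)`-set `S`: `γₜ(G) = 2γ(G)` iff `S` is both a packing and a dominating set of `G`. -/
theorem stmt0 {V : Type*} [Fintype V] (G : SimpleGraph V) (hiso : NoIsolated G)
    (hH1 : Free H1 G) (hH2 : Free H2 G) (hC6 : Free (cycleGraph 6) G)
    (S : Set V) (hS : IsSGSet G S) :
    totalDomNum G = 2 * domNum G ↔ IsPacking G S ∧ IsDomSet G S := by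
  refine ⟨fun heq => ?_, fun ⟨hP, hPD⟩ => hP.totalDomNum_eq hiso hS.1 hPD⟩
  obtain ⟨D, hD⟩ := exists_isMinDomSet G
  have hsp : ∀ d ∈ D, Special G d := fun d => hD.special hiso hH1 hH2 hC6 heq
  have htwin : ∀ x, Special G x → ∃ d ∈ D, cnbr G x = cnbr G d := fun x hx => by
    obtain ⟨d, hd, rfl | hdx⟩ := hD.1.exists_mem_cnbr x
    exacts [⟨x, hd, rfl⟩, ⟨d, hd, hD.cnbr_eq_of_special hiso heq hsp hd hdx hx⟩]
  exact ⟨hS.isPacking (hD.isPacking hiso heq) htwin, hS.isDomSet hD.1 hsp⟩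

end TotalDom
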